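/- arXiv:2312.05134 — 7 statements merged into one kernel-verified Lean document; each statement's English description precedes it below -/
import Mathlib

section
/- Let q > 0 and x ∈ [0, log 2]. Let y, y' ∈ (0,1) satisfy y ≥ q and y' ≥ exp(x)·y. Then the Kullback–Leibler divergence between the Bernoulli distributions with means y and y' satisfies KL(Ber(y)‖Ber(y')) = y·log(y/y') + (1−y)·log((1−y)/(1−y')) ≥ q·x²/4. -/
/-!
Bounding the second term of the divergence by `log t ≥ 1 - 1/t` leaves
`KL(Ber(y)‖Ber(y')) ≥ y · (t - 1 - log t)` with `t = y'/y`. Since `t ↦ t - 1 - log t` is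
increasing on `[1, ∞)` and `t ≥ exp x`, this is at least `y · (exp x - 1 - x) ≥ y · x² / 2`.
-/

open Real

lemma sub_le_mul_log_div {a b : ℝ} (ha : 0 < a) (hb : 0 < b) : a - b ≤ a * log (a / b) := by
  have h := one_sub_inv_le_log_of_pos (div_pos ha hb)
  rw [inv_div] at h
  calc a - b = a * (1 - b / a) := by field_simp
    _ ≤ a * log (a / b) := by gcongr

lemma sub_one_sub_log_le_of_le {s t : ℝ} (hs : 1 ≤ s) (hst : s ≤ t) :
    s - 1 - log s ≤ t - 1 - log t := by
  have hs0 : 0 < s := by linarith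
  have hlog : log t - log s ≤ t / s - 1 := by
    rw [← log_div (by linarith) hs0.ne']
    exact log_le_sub_one_of_pos (div_pos (by linarith) hs0)
  have hgap : t / s - 1 ≤ t - s := by
    rw [div_sub_one hs0.ne', div_le_iff₀ hs0]
    nlinarith
  linarith

lemma mul_sub_one_sub_log_div_le_bernoulli_kl {y y' : ℝ} (hy0 : 0 < y) (hy1 : y < 1)
    (hy'0 : 0 < y') (hy'1 : y' < 1) :
    y * (y' / y - 1 - log (y' / y)) ≤
      y * log (y / y') + (1 - y) * log ((1 - y) / (1 - y')) := by
  have hsecond := sub_le_mul_log_div (sub_pos.2 hy1) (sub_pos.2 hy'1)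
  have hfirst : y * log (y / y') = -(y * log (y' / y)) := by
    rw [← inv_div, log_inv, mul_neg]
  have hratio : y * (y' / y) = y' := by field_simp
  rw [hfirst]
  linarith [mul_sub y (y' / y - 1) (log (y' / y))]

theorem bernoulli_kl_lower_bound_general (q x y y' : ℝ)
    (hx0 : 0 ≤ x)
    (hy0 : 0 < y) (hy1 : y < 1) (hy'0 : 0 < y') (hy'1 : y' < 1)
    (hyq : q ≤ y) (hyy' : Real.exp x * y ≤ y') :
    q * x ^ 2 / 4 ≤ y * Real.log (y / y') + (1 - y) * Real.log ((1 - y) / (1 - y')) := by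
  have hratio : exp x ≤ y' / y := (le_div_iff₀ hy0).2 hyy'
  have hmono := sub_one_sub_log_le_of_le (one_le_exp hx0) hratio
  rw [log_exp] at hmono
  have hquad := quadratic_le_exp_of_nonneg hx0
  calc q * x ^ 2 / 4 ≤ y * (x ^ 2 / 2) := by nlinarith [sq_nonneg x]
    _ ≤ y * (exp x - 1 - x) := by gcongr; linarith
    _ ≤ y * (y' / y - 1 - log (y' / y)) := by gcongr
    _ ≤ _ := mul_sub_one_sub_log_div_le_bernoulli_kl hy0 hy1 hy'0 hy'1

/-- For `q > 0`, `x ∈ [0, log 2]`, `y, y' ∈ (0,1)` with `y ≥ q` and `y' ≥ exp(x)·y`,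
the KL divergence between Bernoulli(y) and Bernoulli(y') is at least `q·x²/4`. -/
theorem bernoulli_kl_lower_bound (q x y y' : ℝ)
    (hq : 0 < q) (hx0 : 0 ≤ x) (hx1 : x ≤ Real.log 2)
    (hy0 : 0 < y) (hy1 : y < 1) (hy'0 : 0 < y') (hy'1 : y' < 1)
    (hyq : q ≤ y) (hyy' : Real.exp x * y ≤ y') :
    q * x ^ 2 / 4 ≤ y * Real.log (y / y') + (1 - y) * Real.log ((1 - y) / (1 - y')) :=
  bernoulli_kl_lower_bound_general q x y y' hx0 hy0 hy1 hy'0 hy'1 hyq hyy'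
end

section
/- For all reals y, y' with 0 < y ≤ y' < 1, the Kullback–Leibler divergence between Bernoulli distributions satisfies KL(Ber(y)‖Ber(y')) = y·log(y/y') + (1−y)·log((1−y)/(1−y')) ≥ (y'−y)²/(2y'). -/
/-!
Write `t = log (y' / y) ≥ 0`. Since `sinh t ≥ t` and `sinh t = (y'/y - y/y') / 2`, the first term
`-y t` of the divergence is at least `-(y'² - y²) / (2y')`; the second term is at least `y' - y` by
`log u ≥ 1 - u⁻¹`. These two bounds add up to exactly `(y' - y)² / (2y')`.
-/

namespace Real

lemma log_le_sub_inv_div_two {x : ℝ} (hx : 1 ≤ x) : log x ≤ (x - x⁻¹) / 2 :=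
  sinh_log (zero_lt_one.trans_le hx) ▸ self_le_sinh_iff.2 (log_nonneg hx)

lemma mul_log_div_le_sq_sub_sq_div {x y : ℝ} (hx : 0 < x) (hxy : x ≤ y) :
    x * log (y / x) ≤ (y ^ 2 - x ^ 2) / (2 * y) := by
  have hy : 0 < y := hx.trans_le hxy
  calc x * log (y / x) ≤ x * ((y / x - (y / x)⁻¹) / 2) :=
        mul_le_mul_of_nonneg_left (log_le_sub_inv_div_two ((one_le_div hx).2 hxy)) hx.le
    _ = (y ^ 2 - x ^ 2) / (2 * y) := by field_simp

lemma sub_le_mul_log_div {a b : ℝ} (ha : 0 < a) (hb : 0 < b) : a - b ≤ a * log (a / b) :=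
  calc a - b = a * (1 - (a / b)⁻¹) := by field_simp
    _ ≤ a * log (a / b) :=
      mul_le_mul_of_nonneg_left (one_sub_inv_le_log_of_pos (div_pos ha hb)) ha.le

end Real

/-- For `0 < y ≤ y' < 1`, the Bernoulli KL divergence satisfies
`KL(Ber(y)‖Ber(y')) ≥ (y'−y)²/(2y')`. -/
theorem bernoulli_kl_ge_sq_div (y y' : ℝ) (hy0 : 0 < y) (hyy' : y ≤ y') (hy'1 : y' < 1) :
    (y' - y) ^ 2 / (2 * y') ≤
      y * Real.log (y / y') + (1 - y) * Real.log ((1 - y) / (1 - y')) := by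
  have hy' : 0 < y' := hy0.trans_le hyy'
  have first : y * Real.log (y' / y) ≤ (y' ^ 2 - y ^ 2) / (2 * y') :=
    Real.mul_log_div_le_sq_sub_sq_div hy0 hyy'
  have second : (1 - y) - (1 - y') ≤ (1 - y) * Real.log ((1 - y) / (1 - y')) :=
    Real.sub_le_mul_log_div (by linarith) (by linarith)
  have log_swap : Real.log (y / y') = -Real.log (y' / y) := by rw [← Real.log_inv, inv_div]
  have split : (y' - y) ^ 2 / (2 * y') = (y' - y) - (y' ^ 2 - y ^ 2) / (2 * y') := by
    field_simp
    ring
  rw [log_swap, split]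
  linarith
end

section
/- Let n ≥ 1 be an integer, let L be a finite nonempty set of vectors in ℝⁿ, and let w¹, w² ∈ ℝⁿ satisfy |w¹_i| ≤ |w²_i| for every i ∈ {1,…,n}. Then the average over all sign vectors σ ∈ {−1,1}ⁿ of max_{f ∈ L} Σ_{i=1}^n σ_i·w¹_i·f_i is at most the average over all σ ∈ {−1,1}ⁿ of max_{f ∈ L} Σ_{i=1}^n σ_i·w²_i·f_i; that is, 2^{−n} Σ_{σ ∈ {−1,1}ⁿ} max_{f ∈ L} Σ_i σ_i w¹_i f_i ≤ 2^{−n} Σ_{σ ∈ {−1,1}ⁿ} max_{f ∈ L} Σ_i σ_i w²_i f_i. -/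
open Finset

private lemma sup'_pair_le_base {α : Type*} (L : Finset α) (hL : L.Nonempty)
    (u r : α → ℝ) {c d : ℝ} (hc : 0 ≤ c) (hcd : c ≤ d) :
    L.sup' hL (fun f => c * u f + r f) + L.sup' hL (fun f => -c * u f + r f) ≤
      L.sup' hL (fun f => d * u f + r f) + L.sup' hL (fun f => -d * u f + r f) := by
  rcases eq_or_lt_of_le (hc.trans hcd) with rfl | hd
  · obtain rfl : c = 0 := le_antisymm hcd hc
    simp
  · set t : ℝ := (d + c) / (2 * d) with ht_def
    set s : ℝ := (d - c) / (2 * d) with hs_def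
    have hdne : d ≠ 0 := ne_of_gt hd
    have hts : t + s = 1 := by rw [ht_def, hs_def]; field_simp; ring
    have ht0 : 0 ≤ t := by positivity
    have hs0 : 0 ≤ s := by
      apply div_nonneg (by linarith) (by linarith)
    set S1 := L.sup' hL (fun f => d * u f + r f) with hS1
    set S2 := L.sup' hL (fun f => -d * u f + r f) with hS2
    have h1 : L.sup' hL (fun f => c * u f + r f) ≤ t * S1 + s * S2 := by
      apply Finset.sup'_le
      intro f hf
      have A : d * u f + r f ≤ S1 := Finset.le_sup' (fun f => d * u f + r f) hf
      have B : -d * u f + r f ≤ S2 := Finset.le_sup' (fun f => -d * u f + r f) hf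
      have key : c * u f + r f = t * (d * u f + r f) + s * (-d * u f + r f) := by
        rw [ht_def, hs_def]
        field_simp
        ring
      rw [key]
      exact add_le_add (mul_le_mul_of_nonneg_left A ht0) (mul_le_mul_of_nonneg_left B hs0)
    have h2 : L.sup' hL (fun f => -c * u f + r f) ≤ t * S2 + s * S1 := by
      apply Finset.sup'_le
      intro f hf
      have A : d * u f + r f ≤ S1 := Finset.le_sup' (fun f => d * u f + r f) hf
      have B : -d * u f + r f ≤ S2 := Finset.le_sup' (fun f => -d * u f + r f) hf
      have key : -c * u f + r f = t * (-d * u f + r f) + s * (d * u f + r f) := by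
        rw [ht_def, hs_def]
        field_simp
        ring
      rw [key]
      exact add_le_add (mul_le_mul_of_nonneg_left B ht0) (mul_le_mul_of_nonneg_left A hs0)
    have hsum : t * S1 + s * S2 + (t * S2 + s * S1) = S1 + S2 := by
      linear_combination (S1 + S2) * hts
    linarith

private lemma sup'_pair_le {α : Type*} (L : Finset α) (hL : L.Nonempty)
    (u r : α → ℝ) {c d : ℝ} (h : |c| ≤ |d|) :
    L.sup' hL (fun f => c * u f + r f) + L.sup' hL (fun f => -c * u f + r f) ≤
      L.sup' hL (fun f => d * u f + r f) + L.sup' hL (fun f => -d * u f + r f) := by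
  have P : ∀ e : ℝ,
      L.sup' hL (fun f => e * u f + r f) + L.sup' hL (fun f => -e * u f + r f) =
      L.sup' hL (fun f => |e| * u f + r f) + L.sup' hL (fun f => -|e| * u f + r f) := by
    intro e
    rcases abs_cases e with ⟨he, _⟩ | ⟨he, _⟩
    · rw [he]
    · rw [he]
      simp only [neg_neg]
      exact add_comm _ _
  rw [P c, P d]
  exact sup'_pair_le_base L hL u r (abs_nonneg c) h

private lemma step_lemma (n : ℕ) (L : Finset (Fin n → ℝ)) (hL : L.Nonempty)
    (w w' : Fin n → ℝ) (i : Fin n)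
    (hagree : ∀ j, j ≠ i → w j = w' j) (hi : |w i| ≤ |w' i|) :
    ∑ σ : Fin n → Bool,
        L.sup' hL (fun f => ∑ j, (if σ j then (1 : ℝ) else -1) * w j * f j) ≤
      ∑ σ : Fin n → Bool,
        L.sup' hL (fun f => ∑ j, (if σ j then (1 : ℝ) else -1) * w' j * f j) := by
  classical
  set e := (Equiv.funSplitAt i Bool).symm with he
  have split : ∀ v : Fin n → ℝ,
      (∑ σ : Fin n → Bool,
        L.sup' hL (fun f => ∑ j, (if σ j then (1 : ℝ) else -1) * v j * f j)) =
      ∑ τ : { j : Fin n // j ≠ i } → Bool,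
        ((L.sup' hL fun f => v i * f i +
            ∑ j : { j : Fin n // j ≠ i }, (if τ j then (1 : ℝ) else -1) * v j * f j) +
         (L.sup' hL fun f => -(v i) * f i +
            ∑ j : { j : Fin n // j ≠ i }, (if τ j then (1 : ℝ) else -1) * v j * f j)) := by
    intro v
    rw [← Equiv.sum_comp e, Fintype.sum_prod_type, Fintype.sum_bool, ← Finset.sum_add_distrib]
    apply Finset.sum_congr rfl
    intro τ _
    have inner : ∀ (b : Bool) (f : Fin n → ℝ),
        (∑ j, (if e (b, τ) j then (1 : ℝ) else -1) * v j * f j) =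
        (if b then (1 : ℝ) else -1) * (v i * f i) +
          ∑ j : { j : Fin n // j ≠ i }, (if τ j then (1 : ℝ) else -1) * v j * f j := by
      intro b f
      rw [Fintype.sum_eq_add_sum_compl i]
      congr 1
      · have : e (b, τ) i = b := by
          simp [he, Equiv.funSplitAt]
        rw [this]; ring
      · rw [Finset.sum_subtype (p := fun j => j ≠ i) ({i}ᶜ : Finset (Fin n))
          (fun j => by simp) (fun j => (if e (b, τ) j then (1 : ℝ) else -1) * v j * f j)]
        apply Finset.sum_congr rfl
        intro j _
        have : e (b, τ) j = τ j := by
          simp [he, Equiv.funSplitAt, j.2]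
        rw [this]
    congr 1
    · apply Finset.sup'_congr _ rfl
      intro f _
      rw [inner true f]; norm_num
    · apply Finset.sup'_congr _ rfl
      intro f _
      rw [inner false f]; norm_num
  rw [split w, split w']
  apply Finset.sum_le_sum
  intro τ _
  have hR : ∀ f : Fin n → ℝ,
      (∑ j : { j : Fin n // j ≠ i }, (if τ j then (1 : ℝ) else -1) * w j * f j) =
      ∑ j : { j : Fin n // j ≠ i }, (if τ j then (1 : ℝ) else -1) * w' j * f j := by
    intro f
    apply Finset.sum_congr rfl
    intro j _
    rw [hagree j j.2]
  simp only [hR]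
  exact sup'_pair_le L hL (fun f => f i)
    (fun f => ∑ j : { j : Fin n // j ≠ i }, (if τ j then (1 : ℝ) else -1) * w' j * f j) hi

/-- Rademacher comparison: if `|w¹_i| ≤ |w²_i|` for all `i`, then the average over all
sign vectors `σ ∈ {−1,1}ⁿ` of `max_{f ∈ L} Σ_i σ_i·w¹_i·f_i` is at most the corresponding
average with `w²` in place of `w¹`. -/
theorem rademacher_weight_comparison (n : ℕ) (hn : 1 ≤ n)
    (L : Finset (Fin n → ℝ)) (hL : L.Nonempty)
    (w1 w2 : Fin n → ℝ) (hw : ∀ i, |w1 i| ≤ |w2 i|) :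
    (2 ^ n : ℝ)⁻¹ * ∑ σ : Fin n → Bool,
        L.sup' hL (fun f => ∑ i, (if σ i then (1 : ℝ) else -1) * w1 i * f i) ≤
      (2 ^ n : ℝ)⁻¹ * ∑ σ : Fin n → Bool,
        L.sup' hL (fun f => ∑ i, (if σ i then (1 : ℝ) else -1) * w2 i * f i) := by
  set S : (Fin n → ℝ) → ℝ := fun v => ∑ σ : Fin n → Bool,
      L.sup' hL (fun f => ∑ i, (if σ i then (1 : ℝ) else -1) * v i * f i) with hS
  have main : S w1 ≤ S w2 := by
    set mix : ℕ → Fin n → ℝ := fun k i => if (i : ℕ) < k then w2 i else w1 i with hmix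
    have key : ∀ k, k ≤ n → S w1 ≤ S (mix k) := by
      intro k
      induction k with
      | zero =>
        intro _
        have : mix 0 = w1 := by
          funext i; simp [hmix]
        rw [this]
      | succ k ih =>
        intro hk
        have hkn : k < n := lt_of_lt_of_le (Nat.lt_succ_self k) hk
        refine (ih (le_of_lt hkn)).trans ?_
        apply step_lemma n L hL (mix k) (mix (k + 1)) ⟨k, hkn⟩
        · intro j hj
          have hjk : (j : ℕ) ≠ k := fun h => hj (Fin.ext h)
          simp only [hmix]
          rcases lt_or_ge (j : ℕ) k with h | h
          · rw [if_pos h, if_pos (Nat.lt_succ_of_lt h)]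
          · have h' : ¬ (j : ℕ) < k := not_lt.mpr h
            have h'' : ¬ (j : ℕ) < k + 1 := by omega
            rw [if_neg h', if_neg h'']
        · simp only [hmix]
          simp only [lt_self_iff_false, if_false, Nat.lt_succ_self, if_true]
          exact hw ⟨k, hkn⟩
    have hfin : mix n = w2 := by
      funext i; simp [hmix, i.is_lt]
    have := key n le_rfl
    rwa [hfin] at this
  have hpos : (0 : ℝ) ≤ (2 ^ n : ℝ)⁻¹ := by positivity
  exact mul_le_mul_of_nonneg_left main hpos
end

section
/- Let k ≥ 1 and T ≥ 1 be integers, η > 0, and let r^1, …, r^T ∈ ℝ^k satisfy −1 ≤ r_i^t ≤ 1 for all i and t. Let W_i^1 = 1 and W_i^{t+1} = W_i^t·exp(η·r_i^t), with normalized weights w_i^t = W_i^t / Σ_{j=1}^k W_j^t. If for reals p, q, x with p ≥ 2q > 0 and x > 0 the pair (t1, t2) is a (p,q,x)-segment of the sequence (w^t), then t2 − t1 ≥ x/(2η). -/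
/-- A `(p,q,x)`-segment of the Hedge trajectory with `p ≥ 2q > 0` has length at least
`x/(2η)`: if there is a subset `I` with `Σ_{i∈I} w_i^{t1} ∈ [p/2, p]`,
`Σ_{i∈I} w_i^{t2} ≥ p·exp(x)`, and `Σ_{i∈I} w_i^t ≥ q` for all `t1 ≤ t ≤ t2`,
then `t2 − t1 ≥ x/(2η)`. -/
theorem hedge_segment_length (k T : ℕ) (hk : 0 < k) (hT : 1 ≤ T)
    (η : ℝ) (hη : 0 < η)
    (r : ℕ → Fin k → ℝ) (hr : ∀ t i, -1 ≤ r t i ∧ r t i ≤ 1)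
    (W w : ℕ → Fin k → ℝ)
    (hW1 : ∀ i, W 1 i = 1)
    (hWrec : ∀ t, 1 ≤ t → t ≤ T → ∀ i, W (t + 1) i = W t i * Real.exp (η * r t i))
    (hw : ∀ t i, w t i = W t i / ∑ j, W t j)
    (p q x : ℝ) (hq : 0 < q) (hpq : 2 * q ≤ p) (hx : 0 < x)
    (t1 t2 : ℕ) (ht1 : 1 ≤ t1) (ht12 : t1 < t2) (ht2 : t2 ≤ T)
    (hseg : ∃ I : Finset (Fin k),
      (p / 2 ≤ ∑ i ∈ I, w t1 i) ∧ (∑ i ∈ I, w t1 i ≤ p) ∧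
      (p * Real.exp x ≤ ∑ i ∈ I, w t2 i) ∧
      (∀ t, t1 ≤ t → t ≤ t2 → q ≤ ∑ i ∈ I, w t i)) :
    x / (2 * η) ≤ (t2 : ℝ) - (t1 : ℝ) := by
  obtain ⟨I, h1, h2, h3, h4⟩ := hseg
  -- positivity of W
  have hWpos : ∀ t, 1 ≤ t → t ≤ T + 1 → ∀ i, 0 < W t i := by
    intro t ht
    induction t, ht using Nat.le_induction with
    | base => intro _ i; rw [hW1]; norm_num
    | succ n hn ih =>
      intro h i
      rw [hWrec n hn (by omega) i]
      exact mul_pos (ih (by omega) i) (Real.exp_pos _)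
  have hp : 0 < p := lt_of_lt_of_le (by linarith) hpq
  set S : ℕ → ℝ := fun t => ∑ i ∈ I, w t i with hS
  -- step bound
  have hstep : ∀ t, 1 ≤ t → t ≤ T → S (t + 1) ≤ Real.exp (2 * η) * S t := by
    intro t h1t htT
    have hpos : ∀ i, 0 < W t i := hWpos t h1t (by omega)
    have hposS : 0 < ∑ j, W t j :=
      Finset.sum_pos (fun j _ => hpos j) (by simp [Finset.univ_nonempty_iff, Fin.pos_iff_nonempty.mp hk])
    have hposS' : 0 < ∑ j, W (t + 1) j :=
      Finset.sum_pos (fun j _ => hWpos (t+1) (by omega) (by omega) j)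
        (by simp [Finset.univ_nonempty_iff, Fin.pos_iff_nonempty.mp hk])
    have hnum : ∑ i ∈ I, W (t + 1) i ≤ Real.exp η * ∑ i ∈ I, W t i := by
      rw [Finset.mul_sum]
      apply Finset.sum_le_sum
      intro i _
      rw [hWrec t h1t htT i, mul_comm (Real.exp η)]
      apply mul_le_mul_of_nonneg_left _ (hpos i).le
      exact Real.exp_le_exp.mpr (by nlinarith [(hr t i).2])
    have hden : Real.exp (-η) * ∑ j, W t j ≤ ∑ j, W (t + 1) j := by
      rw [Finset.mul_sum]
      apply Finset.sum_le_sum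
      intro i _
      rw [hWrec t h1t htT i, mul_comm (Real.exp (-η))]
      apply mul_le_mul_of_nonneg_left _ (hpos i).le
      exact Real.exp_le_exp.mpr (by nlinarith [(hr t i).1])
    have hSnum : 0 ≤ ∑ i ∈ I, W t i :=
      Finset.sum_nonneg fun i _ => (hpos i).le
    have hSdef : ∀ s, S s = (∑ i ∈ I, W s i) / ∑ j, W s j := by
      intro s
      simp only [hS, hw]
      rw [← Finset.sum_div]
    rw [hSdef, hSdef]
    calc (∑ i ∈ I, W (t + 1) i) / ∑ j, W (t + 1) j
        ≤ (Real.exp η * ∑ i ∈ I, W t i) / (Real.exp (-η) * ∑ j, W t j) := by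
          apply div_le_div₀ (by positivity) hnum (by positivity) hden
      _ = Real.exp (2 * η) * ((∑ i ∈ I, W t i) / ∑ j, W t j) := by
          rw [mul_div_mul_comm, ← Real.exp_sub]
          ring_nf
  -- iterate
  have hiter : ∀ n, t1 + n ≤ T + 1 → S (t1 + n) ≤ Real.exp (2 * η * n) * S t1 := by
    intro n
    induction n with
    | zero => intro _; simp
    | succ m ih =>
      intro h
      have := hstep (t1 + m) (by omega) (by omega)
      have h2 := ih (by omega)
      calc S (t1 + (m + 1)) = S (t1 + m + 1) := by ring_nf
      _ ≤ Real.exp (2 * η) * S (t1 + m) := this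
      _ ≤ Real.exp (2 * η) * (Real.exp (2 * η * m) * S t1) := by
          apply mul_le_mul_of_nonneg_left h2 (Real.exp_pos _).le
      _ = Real.exp (2 * η * ((m + 1 : ℕ) : ℝ)) * S t1 := by
          rw [← mul_assoc, ← Real.exp_add]; push_cast; ring_nf
  have hn : t2 = t1 + (t2 - t1) := by omega
  have hfin : S t2 ≤ Real.exp (2 * η * (t2 - t1 : ℕ)) * S t1 := by
    have := hiter (t2 - t1) (by omega)
    rwa [← hn] at this
  have hchain : p * Real.exp x ≤ Real.exp (2 * η * (t2 - t1 : ℕ)) * p := by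
    calc p * Real.exp x ≤ S t2 := h3
      _ ≤ Real.exp (2 * η * (t2 - t1 : ℕ)) * S t1 := hfin
      _ ≤ Real.exp (2 * η * (t2 - t1 : ℕ)) * p :=
          mul_le_mul_of_nonneg_left h2 (Real.exp_pos _).le
  have hexp : Real.exp x ≤ Real.exp (2 * η * (t2 - t1 : ℕ)) := by
    have := hchain
    rw [mul_comm (Real.exp _) p] at this
    exact le_of_mul_le_mul_left this hp
  have hxle : x ≤ 2 * η * (t2 - t1 : ℕ) := Real.exp_le_exp.mp hexp
  have hcast : ((t2 - t1 : ℕ) : ℝ) = (t2 : ℝ) - t1 := by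
    push_cast [Nat.cast_sub ht12.le]; ring
  rw [div_le_iff₀ (by positivity)]
  rw [hcast] at hxle
  linarith
end

section
/- Let k and T be positive integers and let j ≥ 1 be an integer with 2^{j+2} ≤ k. Let w^1, …, w^T ∈ Δ(k) be a sequence of probability vectors with w_i^1 = 1/k for all i ∈ {1,…,k}, and suppose w_i^{t+1} ≤ exp(1/10)·w_i^t for all i ∈ {1,…,k} and 1 ≤ t ≤ T−1. Then for every index i such that w_i^{t*} > 2^{−j} for some t* ∈ {1,…,T}, there exist 1 ≤ s < e ≤ T such that 2^{−(j+2)} < w_i^s ≤ 2^{−(j+1)}, w_i^e > 2^{−j}, and w_i^t > 2^{−(j+2)} for every t with s ≤ t ≤ e. -/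
/-- Existence of a segment for each heavy coordinate: if the probability vectors
`w^1, …, w^T` start uniform, grow by at most a factor `exp(1/10)` per step, and
coordinate `i` exceeds `2^{−j}` at some time, then there is an interval `[s,e]` on which
`w_i` goes from `(2^{−(j+2)}, 2^{−(j+1)}]` up above `2^{−j}` while staying above
`2^{−(j+2)}` throughout. -/
theorem exists_segment_of_heavy_coordinate (k T j : ℕ)
    (hk : 0 < k) (hT : 0 < T) (hj : 1 ≤ j) (hjk : 2 ^ (j + 2) ≤ k)
    (w : ℕ → Fin k → ℝ)
    (hΔ : ∀ t, 1 ≤ t → t ≤ T → (∀ i, 0 ≤ w t i) ∧ ∑ i, w t i = 1)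
    (hinit : ∀ i, w 1 i = 1 / k)
    (hstep : ∀ t, 1 ≤ t → t ≤ T - 1 → ∀ i, w (t + 1) i ≤ Real.exp (1 / 10) * w t i)
    (i : Fin k) (tstar : ℕ) (htstar1 : 1 ≤ tstar) (htstarT : tstar ≤ T)
    (hbig : (1 : ℝ) / 2 ^ j < w tstar i) :
    ∃ s e : ℕ, 1 ≤ s ∧ s < e ∧ e ≤ T ∧
      (1 : ℝ) / 2 ^ (j + 2) < w s i ∧ w s i ≤ 1 / 2 ^ (j + 1) ∧
      (1 : ℝ) / 2 ^ j < w e i ∧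
      (∀ t, s ≤ t → t ≤ e → (1 : ℝ) / 2 ^ (j + 2) < w t i) := by
  have hexp : Real.exp (1 / 10) < 2 := by
    rw [show (2 : ℝ) = Real.exp (Real.log 2) by rw [Real.exp_log]; norm_num]
    exact Real.exp_lt_exp.mpr (by linarith [Real.log_two_gt_d9])
  set S := (Finset.Icc 1 tstar).filter (fun t => w t i ≤ 1 / 2 ^ (j + 1)) with hS
  have h1S : (1 : ℕ) ∈ S := by
    refine Finset.mem_filter.mpr ⟨Finset.mem_Icc.mpr ⟨le_refl 1, htstar1⟩, ?_⟩
    rw [hinit i]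
    have hle : (2 : ℝ) ^ (j + 1) ≤ k := by
      have h1 : (2 : ℕ) ^ (j + 1) ≤ 2 ^ (j + 2) := Nat.pow_le_pow_right (by norm_num) (by omega)
      exact_mod_cast le_trans h1 hjk
    exact one_div_le_one_div_of_le (by positivity) hle
  have hne : S.Nonempty := ⟨1, h1S⟩
  set s := S.max' hne with hsdef
  have hsS : s ∈ S := S.max'_mem hne
  obtain ⟨hsIcc, hsle⟩ := Finset.mem_filter.mp hsS
  have hs1 : 1 ≤ s := (Finset.mem_Icc.mp hsIcc).1
  have hstst : s ≤ tstar := (Finset.mem_Icc.mp hsIcc).2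
  have hmono : (1 : ℝ) / 2 ^ (j + 1) ≤ 1 / 2 ^ j :=
    one_div_le_one_div_of_le (by positivity) (by
      exact_mod_cast Nat.pow_le_pow_right (by norm_num : 1 ≤ 2) (by omega : j ≤ j + 1))
  have hsne : s ≠ tstar := by
    intro h
    rw [h] at hsle
    linarith
  have hslt : s < tstar := lt_of_le_of_ne hstst hsne
  have hgt : ∀ t, s < t → t ≤ tstar → (1 : ℝ) / 2 ^ (j + 1) < w t i := by
    intro t h1 h2
    by_contra h
    push_neg at h
    have htS : t ∈ S := Finset.mem_filter.mpr ⟨Finset.mem_Icc.mpr ⟨by omega, h2⟩, h⟩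
    have := Finset.le_max' S t htS
    omega
  have hws1 : (1 : ℝ) / 2 ^ (j + 1) < w (s + 1) i := hgt (s + 1) (by omega) (by omega)
  have hstepS := hstep s hs1 (by omega) i
  have hpow : (2 : ℝ) ^ (j + 2) = 2 ^ (j + 1) * 2 := by
    rw [pow_succ]
  have hA : (0 : ℝ) < 2 ^ (j + 1) := by positivity
  have hE : 0 < Real.exp (1 / 10) := Real.exp_pos _
  have hws : (1 : ℝ) / 2 ^ (j + 2) < w s i := by
    rw [hpow]
    have hwpos : 0 < w s i := by
      by_contra h
      push_neg at h
      nlinarith [mul_nonpos_of_nonneg_of_nonpos (le_of_lt hE) h, div_pos one_pos hA]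
    have h1 : (1 : ℝ) / 2 ^ (j + 1) < Real.exp (1 / 10) * w s i := lt_of_lt_of_le hws1 hstepS
    have h2 : (1 : ℝ) / 2 ^ (j + 1) < 2 * w s i := by nlinarith
    rw [div_lt_iff₀ hA] at h2
    rw [div_lt_iff₀ (by positivity)]
    nlinarith [h2]
  have hmono2 : (1 : ℝ) / 2 ^ (j + 2) < 1 / 2 ^ (j + 1) := by
    rw [hpow]
    rw [div_lt_div_iff₀ (by positivity) hA]
    nlinarith
  refine ⟨s, tstar, hs1, hslt, htstarT, hws, hsle, hbig, ?_⟩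
  intro t h1 h2
  rcases eq_or_lt_of_le h1 with h | h
  · rwa [← h]
  · exact lt_trans hmono2 (hgt t h h2)
end

section
/- Let T ≥ 2 be an integer, let W be a finite index set, and for each i ∈ W let integers s_i, e_i satisfy 1 ≤ s_i < e_i ≤ T. Then there exist an integer P ≥ 0 and pairwise disjoint nonempty subsets W^1, …, W^P of W such that: (ii) Σ_{p=1}^P |W^p| ≥ |W| / (3·(log₂(T) + 1)); and (iii) setting s̃_p = min_{i∈W^p} s_i and ẽ_p = max_{i∈W^p} e_i, one has 1 ≤ s̃_1 < ẽ_1 ≤ s̃_2 < ẽ_2 ≤ … ≤ s̃_P < ẽ_P ≤ T, and moreover max_{i∈W^p} s_i ≤ min_{i∈W^p} e_i for each 1 ≤ p ≤ P. -/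
open Finset

/-!
Pick in each interval `(s i, e i]` a point `t i` of maximal 2-adic valuation; its valuation is
at most `log₂ T`, so by pigeonhole one level `v` is shared by at least `|W| / (⌊log₂ T⌋ + 1)` of
the intervals. Grouping these by `t i` gives blocks whose intervals all contain a common point.
A point `n` of valuation `v` is `≡ 2 ^ v [MOD 2 ^ (v + 1)]`, so `n ± 2 ^ v` have larger valuation
and maximality traps the interval inside `(n - 2 ^ v, n + 2 ^ v)`, while two such points `n < n'`
satisfy `n + 2 ^ (v + 1) ≤ n'`: the blocks are separated.
-/

theorem two_pow_padicValNat_modEq {n : ℕ} (hn : n ≠ 0) :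
    2 ^ padicValNat 2 n ≡ n [MOD 2 ^ (padicValNat 2 n + 1)] := by
  obtain ⟨m, hm⟩ := pow_padicValNat_dvd (p := 2) (n := n)
  have hm_odd : 1 ≡ m [MOD 2] := by
    by_contra h
    obtain ⟨k, rfl⟩ : 2 ∣ m := Nat.dvd_of_mod_eq_zero (by unfold Nat.ModEq at h; omega)
    exact pow_succ_padicValNat_not_dvd hn ⟨k, by rw [pow_succ, mul_assoc]; exact hm⟩
  rw [pow_succ]
  calc 2 ^ padicValNat 2 n = 2 ^ padicValNat 2 n * 1 := (mul_one _).symm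
    _ ≡ 2 ^ padicValNat 2 n * m [MOD 2 ^ padicValNat 2 n * 2] := hm_odd.mul_left' _
    _ = n := hm.symm

theorem two_pow_succ_dvd_sub_two_pow_padicValNat (n : ℕ) :
    2 ^ (padicValNat 2 n + 1) ∣ n - 2 ^ padicValNat 2 n := by
  rcases eq_or_ne n 0 with rfl | hn
  · simp
  exact (Nat.modEq_iff_dvd' (Nat.le_of_dvd (Nat.pos_of_ne_zero hn) pow_padicValNat_dvd)).mp
    (two_pow_padicValNat_modEq hn)

theorem add_two_pow_succ_le_of_padicValNat_eq {n n' : ℕ} (hn : n ≠ 0) (hn' : n' ≠ 0)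
    (hv : padicValNat 2 n = padicValNat 2 n') (hlt : n < n') :
    n + 2 ^ (padicValNat 2 n + 1) ≤ n' := by
  have hmod : n ≡ n' [MOD 2 ^ (padicValNat 2 n + 1)] :=
    (two_pow_padicValNat_modEq hn).symm.trans (by rw [hv]; exact two_pow_padicValNat_modEq hn')
  have := Nat.le_of_dvd (by omega) ((Nat.modEq_iff_dvd' hlt.le).1 hmod)
  omega

theorem exists_le_card_filter_padicValNat_eq {ι : Type*} (W : Finset ι) {t : ι → ℕ} {T : ℕ}
    (ht : ∀ i ∈ W, t i ≤ T) :
    ∃ v, (#W : ℝ) / (Nat.log 2 T + 1) ≤ #{i ∈ W | padicValNat 2 (t i) = v} := by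
  have hlevel (i) (hi : i ∈ W) : padicValNat 2 (t i) ∈ range (Nat.log 2 T + 1) :=
    mem_range_succ_iff.2 ((padicValNat_le_nat_log _).trans (Nat.log_mono_right (ht i hi)))
  obtain ⟨v, -, hv⟩ := exists_le_card_fiber_of_nsmul_le_card_of_maps_to hlevel
    nonempty_range_add_one (b := (#W : ℝ) / (Nat.log 2 T + 1))
    (by rw [card_range, nsmul_eq_mul, Nat.cast_add_one, mul_div_cancel₀ _ (by positivity)])
  exact ⟨v, hv⟩

def IsDyadicPeak (a b n : ℕ) : Prop :=
  n ∈ Ioc a b ∧ ∀ x ∈ Ioc a b, padicValNat 2 x ≤ padicValNat 2 n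

theorem exists_isDyadicPeak {a b : ℕ} (h : a < b) : ∃ n, IsDyadicPeak a b n :=
  exists_max_image _ _ ⟨b, mem_Ioc.2 ⟨h, le_rfl⟩⟩

namespace IsDyadicPeak

variable {a b n : ℕ}

theorem ne_zero (hn : IsDyadicPeak a b n) : n ≠ 0 :=
  Nat.ne_zero_of_lt (mem_Ioc.1 hn.1).1

theorem not_mem_of_two_pow_succ_dvd (hn : IsDyadicPeak a b n) {x : ℕ} (hx : x ≠ 0)
    (hdvd : 2 ^ (padicValNat 2 n + 1) ∣ x) : x ∉ Ioc a b := fun hmem =>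
  not_lt.2 (hn.2 x hmem) ((padicValNat_dvd_iff_le hx).1 hdvd)

theorem two_pow_le (hn : IsDyadicPeak a b n) : 2 ^ padicValNat 2 n ≤ n :=
  Nat.le_of_dvd (Nat.pos_of_ne_zero hn.ne_zero) pow_padicValNat_dvd

theorem lt_add_two_pow (hn : IsDyadicPeak a b n) : b < n + 2 ^ padicValNat 2 n := by
  have hsplit : n + 2 ^ padicValNat 2 n = n - 2 ^ padicValNat 2 n + 2 ^ (padicValNat 2 n + 1) := by
    have := hn.two_pow_le
    rw [pow_succ]
    omega
  have hout := hn.not_mem_of_two_pow_succ_dvd (by positivity) <| hsplit ▸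
    (two_pow_succ_dvd_sub_two_pow_padicValNat n).add dvd_rfl
  have := mem_Ioc.1 hn.1
  have : 0 < 2 ^ padicValNat 2 n := by positivity
  rw [mem_Ioc] at hout
  omega

theorem sub_two_pow_le (hn : IsDyadicPeak a b n) : n - 2 ^ padicValNat 2 n ≤ a := by
  by_contra! h
  have hmem := mem_Ioc.1 hn.1
  exact hn.not_mem_of_two_pow_succ_dvd (by omega) (two_pow_succ_dvd_sub_two_pow_padicValNat n)
    (mem_Ioc.2 ⟨h, (Nat.sub_le _ _).trans hmem.2⟩)

theorem right_lt_left_of_lt {a' b' n' : ℕ} (hn : IsDyadicPeak a b n)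
    (hn' : IsDyadicPeak a' b' n') (hv : padicValNat 2 n = padicValNat 2 n') (hlt : n < n') :
    b < a' := by
  have h₁ := hn.lt_add_two_pow
  have h₂ := hn'.sub_two_pow_le
  have h₃ := add_two_pow_succ_le_of_padicValNat_eq hn.ne_zero hn'.ne_zero hv hlt
  rw [← hv] at h₂
  rw [pow_succ] at h₃
  omega

end IsDyadicPeak

namespace Finset

variable {ι α : Type*} [LinearOrder α] (W : Finset ι) (c : ι → α)

noncomputable def sortedFibers (p : Fin #(W.image c)) : Finset ι :=
  {i ∈ W | c i = (W.image c).orderEmbOfFin rfl p}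

variable {W c}

theorem mem_sortedFibers {p : Fin #(W.image c)} {i : ι} :
    i ∈ W.sortedFibers c p ↔ i ∈ W ∧ c i = (W.image c).orderEmbOfFin rfl p :=
  mem_filter

theorem sortedFibers_subset (p : Fin #(W.image c)) : W.sortedFibers c p ⊆ W :=
  filter_subset _ _

theorem sortedFibers_nonempty (p : Fin #(W.image c)) : (W.sortedFibers c p).Nonempty := by
  obtain ⟨i, hi, hci⟩ := mem_image.1 ((W.image c).orderEmbOfFin_mem rfl p)
  exact ⟨i, mem_sortedFibers.2 ⟨hi, hci⟩⟩

theorem lt_of_mem_sortedFibers {p q : Fin #(W.image c)} (hpq : p < q) {i j : ι}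
    (hi : i ∈ W.sortedFibers c p) (hj : j ∈ W.sortedFibers c q) : c i < c j := by
  rw [(mem_sortedFibers.1 hi).2, (mem_sortedFibers.1 hj).2]
  exact ((W.image c).orderEmbOfFin rfl).strictMono hpq

theorem eq_of_mem_sortedFibers {p : Fin #(W.image c)} {i j : ι}
    (hi : i ∈ W.sortedFibers c p) (hj : j ∈ W.sortedFibers c p) : c i = c j :=
  (mem_sortedFibers.1 hi).2.trans (mem_sortedFibers.1 hj).2.symm

theorem disjoint_sortedFibers {p q : Fin #(W.image c)} (hpq : p ≠ q) :
    Disjoint (W.sortedFibers c p) (W.sortedFibers c q) := by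
  refine disjoint_left.2 fun i hp hq => ?_
  rcases hpq.lt_or_gt with h | h
  · exact (lt_of_mem_sortedFibers h hp hq).ne rfl
  · exact (lt_of_mem_sortedFibers h hq hp).ne rfl

theorem sum_card_sortedFibers : ∑ p, #(W.sortedFibers c p) = #W := by
  conv_rhs => rw [card_eq_sum_card_fiberwise (fun i hi => mem_image_of_mem c hi),
    ← map_orderEmbOfFin_univ (W.image c) rfl, sum_map]
  rfl

end Finset

theorem disjoint_blocks_of_intervals_general {ι : Type*}
    (T : ℕ) (W : Finset ι) (s e : ι → ℕ)
    (hse : ∀ i ∈ W, 1 ≤ s i ∧ s i < e i ∧ e i ≤ T) :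
    ∃ (P : ℕ) (V : Fin P → Finset ι) (hne : ∀ p, (V p).Nonempty),
      (∀ p, V p ⊆ W) ∧
      (∀ p q : Fin P, p ≠ q → Disjoint (V p) (V q)) ∧
      ((W.card : ℝ) / (3 * (Real.logb 2 T + 1)) ≤ ∑ p, ((V p).card : ℝ)) ∧
      (∀ p : Fin P, 1 ≤ (V p).inf' (hne p) s) ∧
      (∀ p : Fin P, (V p).inf' (hne p) s < (V p).sup' (hne p) e) ∧
      (∀ p q : Fin P, p < q → (V p).sup' (hne p) e ≤ (V q).inf' (hne q) s) ∧
      (∀ p : Fin P, (V p).sup' (hne p) e ≤ T) ∧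
      (∀ p : Fin P, (V p).sup' (hne p) s ≤ (V p).inf' (hne p) e) := by
  choose! t ht using fun i hi => exists_isDyadicPeak (hse i hi).2.1
  obtain ⟨v, hv⟩ := exists_le_card_filter_padicValNat_eq W
    fun i hi => (mem_Ioc.1 (ht i hi).1).2.trans (hse i hi).2.2
  have hlog : (Nat.log 2 T + 1 : ℝ) ≤ 3 * (Real.logb 2 T + 1) := by
    have := Real.natLog_le_logb T 2
    push_cast at this
    linarith [(Nat.cast_nonneg _ : (0 : ℝ) ≤ Nat.log 2 T)]
  set W' := {i ∈ W | padicValNat 2 (t i) = v}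
  have hmem : ∀ p, ∀ i ∈ W'.sortedFibers t p, i ∈ W ∧ padicValNat 2 (t i) = v :=
    fun p i hi => mem_filter.1 (sortedFibers_subset p hi)
  refine ⟨_, W'.sortedFibers t, sortedFibers_nonempty,
    fun p => (sortedFibers_subset p).trans (filter_subset _ _), fun p q => disjoint_sortedFibers,
    ?_, fun p => le_inf' _ _ fun i hi => (hse i (hmem p i hi).1).1, fun p => ?_,
    fun p q hpq => sup'_le _ _ fun i hi => le_inf' _ _ fun j hj => ?_,
    fun p => sup'_le _ _ fun i hi => (hse i (hmem p i hi).1).2.2,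
    fun p => sup'_le _ _ fun i hi => le_inf' _ _ fun j hj => ?_⟩
  · rw [← Nat.cast_sum, sum_card_sortedFibers]
    exact (div_le_div_of_nonneg_left (by positivity) (by positivity) hlog).trans hv
  · obtain ⟨i, hi⟩ := sortedFibers_nonempty p
    exact (inf'_le _ hi).trans_lt ((hse i (hmem p i hi).1).2.1.trans_le (le_sup' _ hi))
  · obtain ⟨hiW, hiv⟩ := hmem p i hi
    obtain ⟨hjW, hjv⟩ := hmem q j hj
    exact ((ht i hiW).right_lt_left_of_lt (ht j hjW) (hiv.trans hjv.symm)
      (lt_of_mem_sortedFibers hpq hi hj)).le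
  · have hi' := mem_Ioc.1 (ht i (hmem p i hi).1).1
    have hj' := mem_Ioc.1 (ht j (hmem p j hj).1).1
    have := eq_of_mem_sortedFibers hi hj
    omega

/-- Partition of segments into disjoint blocks: given intervals `[s_i, e_i] ⊆ [1,T]` with
`s_i < e_i` for each `i` in a finite index set `W`, there are disjoint subsets
`W^1, …, W^P` of `W` covering at least a `1/(3(log₂ T + 1))` fraction of `W`, whose
blocks are ordered (`max_{i∈W^p} e_i ≤ min_{i∈W^q} s_i` for `p < q`) and such that within
each block `max_{i∈W^p} s_i ≤ min_{i∈W^p} e_i`. -/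
theorem disjoint_blocks_of_intervals {ι : Type*} [DecidableEq ι]
    (T : ℕ) (hT : 2 ≤ T) (W : Finset ι) (s e : ι → ℕ)
    (hse : ∀ i ∈ W, 1 ≤ s i ∧ s i < e i ∧ e i ≤ T) :
    ∃ (P : ℕ) (V : Fin P → Finset ι) (hne : ∀ p, (V p).Nonempty),
      (∀ p, V p ⊆ W) ∧
      (∀ p q : Fin P, p ≠ q → Disjoint (V p) (V q)) ∧
      ((W.card : ℝ) / (3 * (Real.logb 2 T + 1)) ≤ ∑ p, ((V p).card : ℝ)) ∧
      (∀ p : Fin P, 1 ≤ (V p).inf' (hne p) s) ∧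
      (∀ p : Fin P, (V p).inf' (hne p) s < (V p).sup' (hne p) e) ∧
      (∀ p q : Fin P, p < q → (V p).sup' (hne p) e ≤ (V q).inf' (hne q) s) ∧
      (∀ p : Fin P, (V p).sup' (hne p) e ≤ T) ∧
      (∀ p : Fin P, (V p).sup' (hne p) s ≤ (V p).inf' (hne p) e) :=
  disjoint_blocks_of_intervals_general T W s e hse
end

section
/- Let k ≥ 1 and T ≥ 1 be integers, η ∈ (0,1], ε₁ ≥ 0, let S be a nonempty set, and let A : S × {1,…,k} → ℝ satisfy −1 ≤ A(s,i) ≤ 1 for all s ∈ S and i. Suppose the sequences (W^t), (w^t), (s^t) satisfy: W_i^1 = 1 for all i; w_i^t = W_i^t / Σ_{j=1}^k W_j^t; s^t ∈ S satisfies Σ_{i=1}^k w_i^t·A(s^t,i) ≤ inf_{s∈S} Σ_{i=1}^k w_i^t·A(s,i) + ε₁; and W_i^{t+1} = W_i^t·exp(η·A(s^t,i)). Then max_{1≤i≤k} (1/T)·Σ_{t=1}^T A(s^t,i) ≤ sup_{w ∈ Δ(k)} inf_{s∈S} Σ_{i=1}^k w_i·A(s,i) + ε₁ + (log k)/(η·T)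 + η. -/
/-!
Each round the potential `Φ_t = Σ_i W_i^t` grows by the factor
`Σ_i w_i^t exp(η A(s^t,i)) ≤ exp(η ⟨w^t, A(s^t,·)⟩ + η²)`, and `⟨w^t, A(s^t,·)⟩` is at most the
minimax value `v` plus `ε₁` because `w^t` is a mixed strategy. Hence
`exp(η Σ_t A(s^t,i)) = W_i^{T+1} ≤ Φ_{T+1} ≤ k exp(T(η(v + ε₁) + η²))`; taking logarithms and
dividing by `ηT` gives the bound.
-/

open Finset Real

theorem abs_sum_mul_le_of_abs_le {ι : Type*} [Fintype ι] {w a : ι → ℝ} {c : ℝ}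
    (hw : w ∈ stdSimplex ℝ ι) (ha : ∀ i, |a i| ≤ c) : |∑ i, w i * a i| ≤ c := by
  calc |∑ i, w i * a i| ≤ ∑ i, w i * |a i| := by
        refine (abs_sum_le_sum_abs _ _).trans_eq (sum_congr rfl fun i _ => ?_)
        rw [abs_mul, abs_of_nonneg (hw.1 i)]
    _ ≤ ∑ i, w i * c := sum_le_sum fun i _ => mul_le_mul_of_nonneg_left (ha i) (hw.1 i)
    _ = c := by rw [← sum_mul, hw.2, one_mul]

theorem ciInf_sum_mul_le {ι S : Type*} [Fintype ι] [Nonempty S] {A : S → ι → ℝ} {c : ℝ}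
    (hA : ∀ s i, |A s i| ≤ c) {u : ι → ℝ} (hu : u ∈ stdSimplex ℝ ι) :
    ⨅ s, ∑ i, u i * A s i ≤ c := by
  have hbdd : BddBelow (Set.range fun s => ∑ i, u i * A s i) :=
    ⟨-c, by
      rintro _ ⟨s, rfl⟩
      exact neg_le_of_abs_le (abs_sum_mul_le_of_abs_le hu (hA s))⟩
  obtain ⟨s⟩ := ‹Nonempty S›
  exact (ciInf_le hbdd s).trans (le_of_abs_le (abs_sum_mul_le_of_abs_le hu (hA s)))

theorem sum_mul_exp_le_exp_sum_mul_add_sq {ι : Type*} [Fintype ι] {w x : ι → ℝ} {δ : ℝ}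
    (hw : w ∈ stdSimplex ℝ ι) (hδ : δ ≤ 1) (hx : ∀ i, |x i| ≤ δ) :
    ∑ i, w i * exp (x i) ≤ exp (∑ i, w i * x i + δ ^ 2) := by
  have hexp : ∀ i, exp (x i) ≤ 1 + x i + δ ^ 2 := fun i => by
    have hquad := abs_exp_sub_one_sub_id_le ((hx i).trans hδ)
    have hsq : x i ^ 2 ≤ δ ^ 2 := sq_le_sq' (abs_le.1 (hx i)).1 (abs_le.1 (hx i)).2
    linarith [le_abs_self (exp (x i) - 1 - x i)]
  calc ∑ i, w i * exp (x i) ≤ ∑ i, w i * (1 + x i + δ ^ 2) :=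
        sum_le_sum fun i _ => mul_le_mul_of_nonneg_left (hexp i) (hw.1 i)
    _ = ∑ i, w i * x i + δ ^ 2 + 1 := by
        simp only [mul_add, sum_add_distrib, ← sum_mul, hw.2]
        ring
    _ ≤ exp (∑ i, w i * x i + δ ^ 2) := add_one_le_exp _

section Hedge

variable {ι S : Type*} {A : S → ι → ℝ} {η : ℝ} {T : ℕ} {W w : ℕ → ι → ℝ}
  {st : ℕ → S}

theorem hedge_weight_eq_exp (hW1 : ∀ i, W 1 i = 1)
    (hWrec : ∀ t, 1 ≤ t → t ≤ T → ∀ i, W (t + 1) i = W t i * exp (η * A (st t) i))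
    {n : ℕ} (hn : n ≤ T) (i : ι) : W (n + 1) i = exp (η * ∑ t ∈ Icc 1 n, A (st t) i) := by
  induction n with
  | zero => simp [hW1]
  | succ m ih =>
    rw [hWrec (m + 1) (by omega) hn, ih (by omega), ← exp_add, sum_Icc_succ_top (by omega),
      mul_add]

theorem hedge_weight_pos (hW1 : ∀ i, W 1 i = 1)
    (hWrec : ∀ t, 1 ≤ t → t ≤ T → ∀ i, W (t + 1) i = W t i * exp (η * A (st t) i))
    {t : ℕ} (ht1 : 1 ≤ t) (htT : t ≤ T + 1) (i : ι) : 0 < W t i := by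
  obtain ⟨n, rfl⟩ := Nat.exists_eq_add_of_le' ht1
  rw [hedge_weight_eq_exp hW1 hWrec (by omega)]
  exact exp_pos _

variable [Fintype ι] [Nonempty ι]

theorem hedge_sum_weight_pos (hW1 : ∀ i, W 1 i = 1)
    (hWrec : ∀ t, 1 ≤ t → t ≤ T → ∀ i, W (t + 1) i = W t i * exp (η * A (st t) i))
    {t : ℕ} (ht1 : 1 ≤ t) (htT : t ≤ T + 1) : 0 < ∑ j, W t j :=
  sum_pos (fun j _ => hedge_weight_pos hW1 hWrec ht1 htT j) univ_nonempty

theorem hedge_distribution_mem_stdSimplex (hW1 : ∀ i, W 1 i = 1)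
    (hw : ∀ t i, w t i = W t i / ∑ j, W t j)
    (hWrec : ∀ t, 1 ≤ t → t ≤ T → ∀ i, W (t + 1) i = W t i * exp (η * A (st t) i))
    {t : ℕ} (ht1 : 1 ≤ t) (htT : t ≤ T + 1) : w t ∈ stdSimplex ℝ ι := by
  have hΦ := hedge_sum_weight_pos hW1 hWrec ht1 htT
  refine ⟨fun i => ?_, ?_⟩
  · rw [hw]
    exact div_nonneg (hedge_weight_pos hW1 hWrec ht1 htT i).le hΦ.le
  · simp only [hw, ← sum_div, div_self hΦ.ne']

theorem hedge_potential_le (hW1 : ∀ i, W 1 i = 1) (hw : ∀ t i, w t i = W t i / ∑ j, W t j)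
    (hWrec : ∀ t, 1 ≤ t → t ≤ T → ∀ i, W (t + 1) i = W t i * exp (η * A (st t) i))
    (hη0 : 0 < η) (hη1 : η ≤ 1) (hA : ∀ s i, |A s i| ≤ 1) {c : ℝ}
    (hc : ∀ t, 1 ≤ t → t ≤ T → ∑ i, w t i * A (st t) i ≤ c) {n : ℕ} (hn : n ≤ T) :
    ∑ i, W (n + 1) i ≤ Fintype.card ι * exp (n * (η * c + η ^ 2)) := by
  induction n with
  | zero => simp [hW1]
  | succ m ih =>
    have hΦ := hedge_sum_weight_pos hW1 hWrec (t := m + 1) (by omega) (by omega)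
    have hsimplex := hedge_distribution_mem_stdSimplex hW1 hw hWrec (t := m + 1) (by omega)
      (by omega)
    have hgrowth : ∑ i, w (m + 1) i * exp (η * A (st (m + 1)) i) ≤ exp (η * c + η ^ 2) := by
      refine (sum_mul_exp_le_exp_sum_mul_add_sq hsimplex hη1 fun i => ?_).trans ?_
      · rw [abs_mul, abs_of_pos hη0]
        exact mul_le_of_le_one_right hη0.le (hA _ i)
      · have hround := hc (m + 1) (by omega) hn
        simp only [mul_left_comm _ η, ← mul_sum]
        gcongr
    calc ∑ i, W (m + 1 + 1) i
        = (∑ j, W (m + 1) j) * ∑ i, w (m + 1) i * exp (η * A (st (m + 1)) i) := by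
          simp only [mul_sum, ← mul_assoc, hw, mul_div_cancel₀ _ hΦ.ne',
            hWrec (m + 1) (by omega) hn]
      _ ≤ (Fintype.card ι * exp (m * (η * c + η ^ 2))) * exp (η * c + η ^ 2) :=
          mul_le_mul (ih (by omega)) hgrowth
            (sum_nonneg fun i _ => mul_nonneg (hsimplex.1 i) (exp_pos _).le) (by positivity)
      _ = Fintype.card ι * exp (↑(m + 1) * (η * c + η ^ 2)) := by
          rw [mul_assoc, ← exp_add]
          push_cast
          ring_nf

theorem hedge_cumulative_le (hW1 : ∀ i, W 1 i = 1) (hw : ∀ t i, w t i = W t i / ∑ j, W t j)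
    (hWrec : ∀ t, 1 ≤ t → t ≤ T → ∀ i, W (t + 1) i = W t i * exp (η * A (st t) i))
    (hη0 : 0 < η) (hη1 : η ≤ 1) (hA : ∀ s i, |A s i| ≤ 1) {c : ℝ}
    (hc : ∀ t, 1 ≤ t → t ≤ T → ∑ i, w t i * A (st t) i ≤ c) (i : ι) :
    η * ∑ t ∈ Icc 1 T, A (st t) i ≤ log (Fintype.card ι) + T * (η * c + η ^ 2) := by
  have hk : (0 : ℝ) < Fintype.card ι := by exact_mod_cast Fintype.card_pos
  rw [← log_exp (T * _), ← log_mul hk.ne' (exp_pos _).ne',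
    le_log_iff_exp_le (mul_pos hk (exp_pos _)), ← hedge_weight_eq_exp hW1 hWrec le_rfl]
  refine le_trans ?_ (hedge_potential_le hW1 hw hWrec hη0 hη1 hA hc le_rfl)
  exact single_le_sum (fun j _ => (hedge_weight_pos hW1 hWrec (by omega) le_rfl j).le)
    (mem_univ i)

end Hedge

theorem hedge_best_response_minimax_general (k T : ℕ) (hk : 0 < k) (hT : 1 ≤ T)
    (η ε₁ : ℝ) (hη0 : 0 < η) (hη1 : η ≤ 1)
    (S : Type*) [Nonempty S] (A : S → Fin k → ℝ)
    (hA : ∀ s i, -1 ≤ A s i ∧ A s i ≤ 1)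
    (W w : ℕ → Fin k → ℝ) (st : ℕ → S)
    (hW1 : ∀ i, W 1 i = 1)
    (hw : ∀ t i, w t i = W t i / ∑ j, W t j)
    (hst : ∀ t, 1 ≤ t → t ≤ T →
      ∑ i, w t i * A (st t) i ≤ (⨅ s : S, ∑ i, w t i * A s i) + ε₁)
    (hWrec : ∀ t, 1 ≤ t → t ≤ T →
      ∀ i, W (t + 1) i = W t i * Real.exp (η * A (st t) i)) :
    Finset.univ.sup' (Finset.univ_nonempty_iff.mpr (Fin.pos_iff_nonempty.mp hk))
        (fun i => (1 / (T : ℝ)) * ∑ t ∈ Finset.Icc 1 T, A (st t) i) ≤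
      sSup {v : ℝ | ∃ u : Fin k → ℝ, (∀ i, 0 ≤ u i) ∧ (∑ i, u i = 1) ∧
          v = ⨅ s : S, ∑ i, u i * A s i}
        + ε₁ + Real.log k / (η * T) + η := by
  have : Nonempty (Fin k) := Fin.pos_iff_nonempty.mp hk
  set V : Set ℝ := {v : ℝ | ∃ u : Fin k → ℝ, (∀ i, 0 ≤ u i) ∧ (∑ i, u i = 1) ∧
      v = ⨅ s : S, ∑ i, u i * A s i}
  have hA' : ∀ s i, |A s i| ≤ 1 := fun s i => abs_le.2 (hA s i)
  have hV : BddAbove V := ⟨1, by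
    rintro _ ⟨u, hu0, hu1, rfl⟩
    exact ciInf_sum_mul_le hA' ⟨hu0, hu1⟩⟩
  have hc : ∀ t, 1 ≤ t → t ≤ T → ∑ i, w t i * A (st t) i ≤ sSup V + ε₁ := fun t ht1 htT => by
    obtain ⟨hw0, hw1⟩ := hedge_distribution_mem_stdSimplex hW1 hw hWrec ht1 (by omega)
    linarith [hst t ht1 htT, le_csSup hV ⟨w t, hw0, hw1, rfl⟩]
  refine sup'_le _ _ fun i _ => ?_
  have hcum := hedge_cumulative_le hW1 hw hWrec hη0 hη1 hA' hc i
  rw [Fintype.card_fin] at hcum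
  have hT0 : (0 : ℝ) < T := by exact_mod_cast hT
  calc 1 / (T : ℝ) * ∑ t ∈ Icc 1 T, A (st t) i = (η * ∑ t ∈ Icc 1 T, A (st t) i) / (η * T) := by
        rw [mul_div_mul_left _ _ hη0.ne', one_div_mul_eq_div]
    _ ≤ (log k + T * (η * (sSup V + ε₁) + η ^ 2)) / (η * T) := by gcongr
    _ = sSup V + ε₁ + log k / (η * T) + η := by
        field_simp
        ring

/-- Minimax guarantee for Hedge with an `ε₁`-approximate best response oracle: the
average play `(1/T)·Σ_t A(s^t, i)` is, for every coordinate `i` (equivalently, for the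
maximizing one), at most the minimax value `sup_{w∈Δ(k)} inf_{s∈S} Σ_i w_i·A(s,i)` plus
`ε₁ + (log k)/(η T) + η`. -/
theorem hedge_best_response_minimax (k T : ℕ) (hk : 0 < k) (hT : 1 ≤ T)
    (η ε₁ : ℝ) (hη0 : 0 < η) (hη1 : η ≤ 1) (hε : 0 ≤ ε₁)
    (S : Type*) [Nonempty S] (A : S → Fin k → ℝ)
    (hA : ∀ s i, -1 ≤ A s i ∧ A s i ≤ 1)
    (W w : ℕ → Fin k → ℝ) (st : ℕ → S)
    (hW1 : ∀ i, W 1 i = 1)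
    (hw : ∀ t i, w t i = W t i / ∑ j, W t j)
    (hst : ∀ t, 1 ≤ t → t ≤ T →
      ∑ i, w t i * A (st t) i ≤ (⨅ s : S, ∑ i, w t i * A s i) + ε₁)
    (hWrec : ∀ t, 1 ≤ t → t ≤ T →
      ∀ i, W (t + 1) i = W t i * Real.exp (η * A (st t) i)) :
    Finset.univ.sup' (Finset.univ_nonempty_iff.mpr (Fin.pos_iff_nonempty.mp hk))
        (fun i => (1 / (T : ℝ)) * ∑ t ∈ Finset.Icc 1 T, A (st t) i) ≤
      sSup {v : ℝ | ∃ u : Fin k → ℝ, (∀ i, 0 ≤ u i) ∧ (∑ i, u i = 1) ∧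
          v = ⨅ s : S, ∑ i, u i * A s i}
        + ε₁ + Real.log k / (η * T) + η :=
  hedge_best_response_minimax_general k T hk hT η ε₁ hη0 hη1 S A hA W w st hW1 hw hst hWrec
end
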